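/- Assume p = 1/2. With the notation of the CEV scale data, the function ψ is three times differentiable on (0,1) and sup_{x∈(0,1)} ( |ψ'(x)| / max(log(1/x), 1) + x |ψ''(x)| + x² |ψ'''(x)| ) < ∞. -/

import Mathlib

open MeasureTheory Set intervalIntegral

/-- The scale density `s(x) = exp(−(2μ/(σ²(2−2p))) x^{2−2p})` of the CEV diffusion. -/
noncomputable def sDen (μ σ p : ℝ) (x : ℝ) : ℝ :=
  Real.exp (-(2 * μ / (σ ^ 2 * (2 - 2 * p))) * x ^ (2 - 2 * p))

/-- The scale function `S(x) = ∫₀ˣ s(z) dz` of the CEV diffusion. -/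
noncomputable def Sfun (μ σ p : ℝ) (x : ℝ) : ℝ := ∫ z in (0 : ℝ)..x, sDen μ σ p z

/-- The speed density `m(y) = 1/(σ² y^{2p} s(y))` of the CEV diffusion. -/
noncomputable def mDen (μ σ p : ℝ) (y : ℝ) : ℝ := 1 / (σ ^ 2 * y ^ (2 * p) * sDen μ σ p y)

/-- `φ(x) = S(x)/S(1)`, the probability that the CEV diffusion started at `x` reaches
`1` before `0`. -/
noncomputable def phiFun (μ σ p : ℝ) (x : ℝ) : ℝ := Sfun μ σ p x / Sfun μ σ p 1

/-- `ψ(x) = 2 φ(x) ∫ₓ¹ (S(1) − S(y)) m(y) dy + 2 (1 − φ(x)) ∫₀ˣ S(y) m(y) dy`, the expectation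
of the exit time of the CEV diffusion from `(0,1)` started at `x`. -/
noncomputable def psiFun (μ σ p : ℝ) (x : ℝ) : ℝ :=
  2 * phiFun μ σ p x * (∫ y in x..(1 : ℝ), (Sfun μ σ p 1 - Sfun μ σ p y) * mDen μ σ p y)
    + 2 * (1 - phiFun μ σ p x) * (∫ y in (0 : ℝ)..x, Sfun μ σ p y * mDen μ σ p y)

/-!
Write `ψ = 2 φ U + 2 (1 - φ) L` with `U x = ∫ₓ¹ (S 1 - S) m` and `L x = ∫₀ˣ S m`.
When `ψ` is differentiated, the terms containing `U'` and `L'` cancel, so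
`ψ' = 2 s (U - L) / S 1`.
For `p = 1/2` we have `s' = -c s` with `c = 2μ/σ²` and `s m = 1/(σ² x)`, hence
`ψ'' = -c ψ' - 2/(σ² x)` and `ψ''' = -c ψ'' + 2/(σ² x²)`.
On `(0, 1]` the integrand of `U` is `O(1/y)` and that of `L` is bounded, so
`|ψ'| = O(log (1/x) + 1)`. Together with `x log (1/x) ≤ 1`, the two recursions turn this into
bounds on `x |ψ''|` and `x² |ψ'''|`.
-/

open Real

theorem IsCompact.exists_pos_bounds {f : ℝ → ℝ} {K : Set ℝ} (hK : IsCompact K)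
    (hne : K.Nonempty) (hf : ContinuousOn f K) (hpos : ∀ x ∈ K, 0 < f x) :
    ∃ a b, 0 < a ∧ ∀ x ∈ K, a ≤ f x ∧ f x ≤ b := by
  obtain ⟨x₀, hx₀, hmin⟩ := hK.exists_isMinOn hne hf
  obtain ⟨x₁, -, hmax⟩ := hK.exists_isMaxOn hne hf
  exact ⟨f x₀, f x₁, hpos x₀ hx₀, fun x hx => ⟨hmin hx, hmax hx⟩⟩

theorem hasDerivAt_deriv_of_forall_hasDerivAt {f f' f'' : ℝ → ℝ} {U : Set ℝ} (hU : IsOpen U)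
    (hf : ∀ x ∈ U, HasDerivAt f (f' x) x) (hf' : ∀ x ∈ U, HasDerivAt f' (f'' x) x) :
    ∀ x ∈ U, HasDerivAt (deriv f) (f'' x) x := fun x hx =>
  (hf' x hx).congr_of_eventuallyEq <|
    Filter.eventually_of_mem (hU.mem_nhds hx) fun y hy => (hf y hy).deriv

theorem abs_integral_le_mul_log_of_abs_le {f : ℝ → ℝ} {C x : ℝ} (hx : 0 < x) (hx1 : x ≤ 1)
    (hf : ∀ y ∈ Ioc x 1, |f y| ≤ C * y⁻¹) :
    |∫ y in x..1, f y| ≤ C * log (1 / x) := by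
  have hinv : IntervalIntegrable (fun y => C * y⁻¹) volume x 1 :=
    (continuousOn_const.mul (continuousOn_inv₀.mono fun y hy => ?_)).intervalIntegrable
  · calc |∫ y in x..1, f y| ≤ ∫ y in x..1, C * y⁻¹ :=
          norm_integral_le_of_norm_le (f := f) hx1 (.of_forall hf) hinv
      _ = C * log (1 / x) := by
          rw [intervalIntegral.integral_const_mul, integral_inv_of_pos hx one_pos]
  · rw [uIcc_of_le hx1] at hy
    exact (hx.trans_le hy.1).ne'

theorem mul_log_one_div_le_one {x : ℝ} (hx : 0 < x) (hx1 : x ≤ 1) : x * log (1 / x) ≤ 1 := by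
  have := abs_log_mul_self_lt x hx hx1
  rw [one_div, log_inv]
  linarith [neg_abs_le (log x * x)]

theorem exists_weighted_sum_le_of_abs_le_log {f : ℝ → ℝ} {c a A B : ℝ} (hA : 0 ≤ A)
    (hB : 0 ≤ B) (hf : ∀ x ∈ Ioo (0 : ℝ) 1, |f x| ≤ A * log (1 / x) + B) :
    ∃ C, ∀ x ∈ Ioo (0 : ℝ) 1, |f x| / max (log (1 / x)) 1 + x * |-c * f x - a / x|
        + x ^ 2 * |-c * (-c * f x - a / x) + a / x ^ 2| ≤ C := by
  refine ⟨(A + B) + (|c| * (A + B) + |a|) + (|c| * (|c| * (A + B) + |a|) + |a|),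
    fun x hx => ?_⟩
  obtain ⟨hx0, hx1⟩ := hx
  have hd := hf x ⟨hx0, hx1⟩
  set d := f x
  have hlog : 0 ≤ log (1 / x) := log_nonneg (by rw [le_div_iff₀ hx0]; linarith)
  have h₁ : |d| / max (log (1 / x)) 1 ≤ A + B := by
    rw [div_le_iff₀ (by positivity)]
    nlinarith [le_max_left (log (1 / x)) 1, le_max_right (log (1 / x)) 1]
  have h₁' : x * |d| ≤ A + B := by
    nlinarith [mul_log_one_div_le_one hx0 hx1.le]
  have h₂ : x * |-c * d - a / x| ≤ |c| * (A + B) + |a| := by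
    calc x * |-c * d - a / x| = |-c * (x * d) - a| := by
          rw [← abs_of_pos hx0, ← abs_mul, abs_of_pos hx0]; congr 1; field_simp
      _ ≤ |c| * (x * |d|) + |a| := by
          refine (abs_sub _ _).trans ?_
          rw [abs_mul, abs_neg, abs_mul, abs_of_pos hx0]
      _ ≤ |c| * (A + B) + |a| := by gcongr
  have h₃ : x ^ 2 * |-c * (-c * d - a / x) + a / x ^ 2|
      ≤ |c| * (|c| * (A + B) + |a|) + |a| := by
    calc x ^ 2 * |-c * (-c * d - a / x) + a / x ^ 2|
          = |-c * (x * (x * (-c * d - a / x))) + a| := by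
          rw [← abs_of_pos (pow_pos hx0 2), ← abs_mul, abs_of_pos (pow_pos hx0 2)]
          congr 1; field_simp
      _ ≤ |c| * (x * (x * |-c * d - a / x|)) + |a| := by
          refine (abs_add_le _ _).trans ?_
          rw [abs_mul, abs_neg, abs_mul, abs_mul, abs_of_pos hx0]
      _ ≤ |c| * (|c| * (A + B) + |a|) + |a| := by
          gcongr
          exact (mul_le_of_le_one_left (by positivity) hx1.le).trans h₂
  linarith

theorem hasDerivAt_green_combination {S U L : ℝ → ℝ} {s m S₁ x : ℝ} (hS₁ : S₁ ≠ 0)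
    (hS : HasDerivAt S s x) (hU : HasDerivAt U (-((S₁ - S x) * m)) x)
    (hL : HasDerivAt L (S x * m) x) :
    HasDerivAt (fun t => 2 * (S t / S₁) * U t + 2 * (1 - S t / S₁) * L t)
      (2 * s / S₁ * (U x - L x)) x := by
  refine ((((hS.div_const S₁).const_mul 2).mul hU).add
    ((((hasDerivAt_const x 1).sub (hS.div_const S₁)).const_mul 2).mul hL)).congr_deriv ?_
  simp only [Pi.sub_apply]
  field_simp
  ring

section ScaleFunction

variable {μ σ p : ℝ}

theorem sDen_pos (x : ℝ) : 0 < sDen μ σ p x := exp_pos _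

theorem continuous_sDen (hp : p ≤ 1) : Continuous (sDen μ σ p) := by
  unfold sDen
  have := continuous_rpow_const (q := 2 - 2 * p) (by linarith)
  fun_prop

theorem hasDerivAt_Sfun (hp : p ≤ 1) (x : ℝ) : HasDerivAt (Sfun μ σ p) (sDen μ σ p x) x :=
  integral_hasDerivAt_right ((continuous_sDen hp).intervalIntegrable _ _)
    ((continuous_sDen hp).stronglyMeasurableAtFilter _ _) (continuous_sDen hp).continuousAt

theorem continuous_Sfun (hp : p ≤ 1) : Continuous (Sfun μ σ p) :=
  continuous_iff_continuousAt.2 fun x => (hasDerivAt_Sfun hp x).continuousAt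

theorem Sfun_zero : Sfun μ σ p 0 = 0 := integral_same

theorem strictMono_Sfun (hp : p ≤ 1) : StrictMono (Sfun μ σ p) :=
  strictMono_of_hasDerivAt_pos (hasDerivAt_Sfun hp) sDen_pos

theorem Sfun_one_pos (hp : p ≤ 1) : 0 < Sfun μ σ p 1 :=
  Sfun_zero (μ := μ) (σ := σ) ▸ strictMono_Sfun hp one_pos

theorem Sfun_mem_Icc (hp : p ≤ 1) {y : ℝ} (hy : y ∈ Icc 0 1) :
    Sfun μ σ p y ∈ Icc 0 (Sfun μ σ p 1) :=
  ⟨Sfun_zero (μ := μ) (σ := σ) ▸ (strictMono_Sfun hp).monotone hy.1,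
    (strictMono_Sfun hp).monotone hy.2⟩

theorem exists_sDen_bounds (hp : p ≤ 1) :
    ∃ a b, 0 < a ∧ ∀ x ∈ Icc (0 : ℝ) 1, a ≤ sDen μ σ p x ∧ sDen μ σ p x ≤ b :=
  isCompact_Icc.exists_pos_bounds (nonempty_Icc.2 zero_le_one)
    (continuous_sDen hp).continuousOn fun x _ => sDen_pos x

theorem Sfun_le_mul {b y : ℝ} (hb : ∀ x ∈ Icc (0 : ℝ) 1, sDen μ σ p x ≤ b)
    (hy : y ∈ Icc (0 : ℝ) 1) : Sfun μ σ p y ≤ b * y := by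
  have := norm_integral_le_of_norm_le_const (a := 0) (b := y) (f := sDen μ σ p) (C := b)
    fun x hx => by
      rw [uIoc_of_le hy.1] at hx
      rw [Real.norm_eq_abs, abs_of_pos (sDen_pos x)]
      exact hb x ⟨hx.1.le, hx.2.trans hy.2⟩
  rw [Real.norm_eq_abs, sub_zero, abs_of_nonneg hy.1] at this
  exact (le_abs_self _).trans this

end ScaleFunction

noncomputable def upperGreenInt (μ σ p x : ℝ) : ℝ :=
  ∫ y in x..(1 : ℝ), (Sfun μ σ p 1 - Sfun μ σ p y) * mDen μ σ p y

noncomputable def lowerGreenInt (μ σ p x : ℝ) : ℝ :=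
  ∫ y in (0 : ℝ)..x, Sfun μ σ p y * mDen μ σ p y

noncomputable def psiDeriv (μ σ p x : ℝ) : ℝ :=
  2 * sDen μ σ p x / Sfun μ σ p 1 * (upperGreenInt μ σ p x - lowerGreenInt μ σ p x)

section SquareRootDiffusion

variable {μ σ : ℝ}

theorem sDen_half (x : ℝ) : sDen μ σ (1 / 2) x = exp (-(2 * μ / σ ^ 2) * x) := by
  norm_num [sDen]

theorem hasDerivAt_sDen_half (x : ℝ) :
    HasDerivAt (sDen μ σ (1 / 2)) (-(2 * μ / σ ^ 2) * sDen μ σ (1 / 2) x) x := by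
  rw [funext sDen_half]
  simpa [mul_comm] using ((hasDerivAt_id x).const_mul (-(2 * μ / σ ^ 2))).exp

theorem mDen_half (y : ℝ) :
    mDen μ σ (1 / 2) y = (σ ^ 2)⁻¹ * y⁻¹ / sDen μ σ (1 / 2) y := by
  norm_num [mDen, div_eq_mul_inv, mul_inv]
  ring

theorem sDen_mul_mDen_half (y : ℝ) :
    sDen μ σ (1 / 2) y * mDen μ σ (1 / 2) y = (σ ^ 2)⁻¹ * y⁻¹ := by
  rw [mDen_half]
  field_simp [(sDen_pos y).ne']

theorem continuousOn_mDen_half : ContinuousOn (mDen μ σ (1 / 2)) (Ioi 0) := by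
  rw [funext mDen_half]
  have := continuous_sDen (μ := μ) (σ := σ) (p := 1 / 2) (by norm_num)
  exact (continuousOn_const.mul (continuousOn_inv₀.mono fun y hy => ne_of_gt hy)).div
    this.continuousOn fun y _ => (sDen_pos y).ne'

theorem exists_abs_upper_integrand_le : ∃ C, 0 ≤ C ∧ ∀ y ∈ Ioc (0 : ℝ) 1,
    |(Sfun μ σ (1 / 2) 1 - Sfun μ σ (1 / 2) y) * mDen μ σ (1 / 2) y| ≤ C * y⁻¹ := by
  have hp : (1 / 2 : ℝ) ≤ 1 := by norm_num
  obtain ⟨a, _, ha, hab⟩ := exists_sDen_bounds (μ := μ) (σ := σ) hp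
  have hS₁ := Sfun_one_pos (μ := μ) (σ := σ) hp
  refine ⟨Sfun μ σ (1 / 2) 1 * (σ ^ 2)⁻¹ / a, by positivity, fun y hy => ?_⟩
  have hy' : y ∈ Icc (0 : ℝ) 1 := ⟨hy.1.le, hy.2⟩
  obtain ⟨hS0, hS1⟩ := Sfun_mem_Icc (μ := μ) (σ := σ) hp hy'
  have hs := sDen_pos (μ := μ) (σ := σ) (p := 1 / 2) y
  have hy0 := hy.1
  rw [mDen_half, abs_of_nonneg (mul_nonneg (sub_nonneg.2 hS1) (by positivity))]
  calc (Sfun μ σ (1 / 2) 1 - Sfun μ σ (1 / 2) y) *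
        ((σ ^ 2)⁻¹ * y⁻¹ / sDen μ σ (1 / 2) y)
      ≤ Sfun μ σ (1 / 2) 1 * ((σ ^ 2)⁻¹ * y⁻¹ / a) := by
        gcongr
        · linarith
        · exact (hab y hy').1
    _ = Sfun μ σ (1 / 2) 1 * (σ ^ 2)⁻¹ / a * y⁻¹ := by ring

theorem exists_abs_lower_integrand_le : ∃ C, 0 ≤ C ∧ ∀ y ∈ Ioc (0 : ℝ) 1,
    |Sfun μ σ (1 / 2) y * mDen μ σ (1 / 2) y| ≤ C := by
  have hp : (1 / 2 : ℝ) ≤ 1 := by norm_num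
  obtain ⟨a, b, ha, hab⟩ := exists_sDen_bounds (μ := μ) (σ := σ) hp
  have hab₀ := hab 0 (left_mem_Icc.2 zero_le_one)
  have hb : 0 < b := ha.trans_le (hab₀.1.trans hab₀.2)
  refine ⟨b * (σ ^ 2)⁻¹ / a, by positivity, fun y hy => ?_⟩
  have hy' : y ∈ Icc (0 : ℝ) 1 := ⟨hy.1.le, hy.2⟩
  have hS0 := (Sfun_mem_Icc (μ := μ) (σ := σ) hp hy').1
  have hs := sDen_pos (μ := μ) (σ := σ) (p := 1 / 2) y
  have hy0 := hy.1
  rw [mDen_half, abs_of_nonneg (by positivity)]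
  calc Sfun μ σ (1 / 2) y * ((σ ^ 2)⁻¹ * y⁻¹ / sDen μ σ (1 / 2) y)
      ≤ b * y * ((σ ^ 2)⁻¹ * y⁻¹ / a) := by
        gcongr
        · exact Sfun_le_mul (fun x hx => (hab x hx).2) hy'
        · exact (hab y hy').1
    _ = b * (σ ^ 2)⁻¹ / a := by field_simp

theorem continuousOn_upper_integrand_half : ContinuousOn
    (fun y => (Sfun μ σ (1 / 2) 1 - Sfun μ σ (1 / 2) y) * mDen μ σ (1 / 2) y) (Ioi 0) :=
  (continuous_const.sub (continuous_Sfun (by norm_num))).continuousOn.mul continuousOn_mDen_half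

theorem continuousOn_lower_integrand_half :
    ContinuousOn (fun y => Sfun μ σ (1 / 2) y * mDen μ σ (1 / 2) y) (Ioi 0) :=
  (continuous_Sfun (by norm_num)).continuousOn.mul continuousOn_mDen_half

theorem hasDerivAt_upperGreenInt_half {x : ℝ} (hx : 0 < x) :
    HasDerivAt (upperGreenInt μ σ (1 / 2))
      (-((Sfun μ σ (1 / 2) 1 - Sfun μ σ (1 / 2) x) * mDen μ σ (1 / 2) x)) x :=
  integral_hasDerivAt_left
    (continuousOn_upper_integrand_half.mono fun _ hy =>
      (lt_min hx one_pos).trans_le hy.1).intervalIntegrable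
    (continuousOn_upper_integrand_half.stronglyMeasurableAtFilter isOpen_Ioi x hx)
    (continuousOn_upper_integrand_half.continuousAt (Ioi_mem_nhds hx))

theorem intervalIntegrable_lower_integrand_half {x : ℝ} (hx : x ∈ Ioc (0 : ℝ) 1) :
    IntervalIntegrable (fun y => Sfun μ σ (1 / 2) y * mDen μ σ (1 / 2) y) volume 0 x := by
  obtain ⟨C, -, hC⟩ := exists_abs_lower_integrand_le (μ := μ) (σ := σ)
  rw [intervalIntegrable_iff_integrableOn_Ioc_of_le hx.1.le]
  exact Integrable.of_bound
    ((continuousOn_lower_integrand_half.mono Ioc_subset_Ioi_self).aestronglyMeasurable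
      measurableSet_Ioc) C
    ((ae_restrict_iff' measurableSet_Ioc).2 <|
      .of_forall fun y hy => hC y ⟨hy.1, hy.2.trans hx.2⟩)

theorem hasDerivAt_lowerGreenInt_half {x : ℝ} (hx : x ∈ Ioc (0 : ℝ) 1) :
    HasDerivAt (lowerGreenInt μ σ (1 / 2))
      (Sfun μ σ (1 / 2) x * mDen μ σ (1 / 2) x) x :=
  integral_hasDerivAt_right (intervalIntegrable_lower_integrand_half hx)
    (continuousOn_lower_integrand_half.stronglyMeasurableAtFilter isOpen_Ioi x hx.1)
    (continuousOn_lower_integrand_half.continuousAt (Ioi_mem_nhds hx.1))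

theorem hasDerivAt_psiFun_half {x : ℝ} (hx : x ∈ Ioo (0 : ℝ) 1) :
    HasDerivAt (psiFun μ σ (1 / 2)) (psiDeriv μ σ (1 / 2) x) x :=
  hasDerivAt_green_combination (Sfun_one_pos (by norm_num)).ne'
    (hasDerivAt_Sfun (by norm_num) x) (hasDerivAt_upperGreenInt_half hx.1)
    (hasDerivAt_lowerGreenInt_half (Ioo_subset_Ioc_self hx))

theorem hasDerivAt_psiDeriv_half {x : ℝ} (hx : x ∈ Ioo (0 : ℝ) 1) :
    HasDerivAt (psiDeriv μ σ (1 / 2))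
      (-(2 * μ / σ ^ 2) * psiDeriv μ σ (1 / 2) x - 2 / σ ^ 2 / x) x := by
  have hS₁ := (Sfun_one_pos (μ := μ) (σ := σ) (p := 1 / 2) (by norm_num)).ne'
  refine ((((hasDerivAt_sDen_half x).const_mul 2).div_const _).mul
    ((hasDerivAt_upperGreenInt_half hx.1).sub
      (hasDerivAt_lowerGreenInt_half (Ioo_subset_Ioc_self hx)))).congr_deriv ?_
  have hsm := sDen_mul_mDen_half (μ := μ) (σ := σ) x
  have hcancel : 2 * sDen μ σ (1 / 2) x / Sfun μ σ (1 / 2) 1 *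
      (-((Sfun μ σ (1 / 2) 1 - Sfun μ σ (1 / 2) x) * mDen μ σ (1 / 2) x)
        - Sfun μ σ (1 / 2) x * mDen μ σ (1 / 2) x) = -2 * ((σ ^ 2)⁻¹ * x⁻¹) := by
    rw [← hsm]
    field_simp
    ring
  simp only [psiDeriv, Pi.sub_apply]
  linear_combination hcancel

theorem exists_abs_upperGreenInt_half_le : ∃ C, 0 ≤ C ∧ ∀ x ∈ Ioo (0 : ℝ) 1,
    |upperGreenInt μ σ (1 / 2) x| ≤ C * log (1 / x) := by
  obtain ⟨C, hC, hU⟩ := exists_abs_upper_integrand_le (μ := μ) (σ := σ)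
  exact ⟨C, hC, fun x hx =>
    abs_integral_le_mul_log_of_abs_le hx.1 hx.2.le fun y hy => hU y ⟨hx.1.trans hy.1, hy.2⟩⟩

theorem exists_abs_lowerGreenInt_half_le : ∃ C, 0 ≤ C ∧ ∀ x ∈ Ioc (0 : ℝ) 1,
    |lowerGreenInt μ σ (1 / 2) x| ≤ C := by
  obtain ⟨C, hC, hL⟩ := exists_abs_lower_integrand_le (μ := μ) (σ := σ)
  refine ⟨C, hC, fun x hx => ?_⟩
  have := norm_integral_le_of_norm_le_const (a := 0) (b := x)
    (f := fun y => Sfun μ σ (1 / 2) y * mDen μ σ (1 / 2) y) fun y hy =>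
    hL y (by rw [uIoc_of_le hx.1.le] at hy; exact ⟨hy.1, hy.2.trans hx.2⟩)
  rw [sub_zero, abs_of_pos hx.1] at this
  exact this.trans (mul_le_of_le_one_right hC hx.2)

theorem exists_abs_psiDeriv_half_le : ∃ A B, 0 ≤ A ∧ 0 ≤ B ∧ ∀ x ∈ Ioo (0 : ℝ) 1,
    |psiDeriv μ σ (1 / 2) x| ≤ A * log (1 / x) + B := by
  obtain ⟨_, b, -, hab⟩ := exists_sDen_bounds (μ := μ) (σ := σ) (p := 1 / 2) (by norm_num)
  obtain ⟨C₁, hC₁, hU⟩ := exists_abs_upperGreenInt_half_le (μ := μ) (σ := σ)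
  obtain ⟨C₂, hC₂, hL⟩ := exists_abs_lowerGreenInt_half_le (μ := μ) (σ := σ)
  have hS₁ := Sfun_one_pos (μ := μ) (σ := σ) (p := 1 / 2) (by norm_num)
  have hfactor : ∀ x ∈ Ioo (0 : ℝ) 1,
      |2 * sDen μ σ (1 / 2) x / Sfun μ σ (1 / 2) 1| ≤ 2 * b / Sfun μ σ (1 / 2) 1 := by
    intro x hx
    rw [abs_of_pos (by have := sDen_pos (μ := μ) (σ := σ) (p := 1 / 2) x; positivity)]
    gcongr
    exact (hab x (Ioo_subset_Icc_self hx)).2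
  set K := 2 * b / Sfun μ σ (1 / 2) 1
  have hK : 0 ≤ K := (abs_nonneg _).trans (hfactor (1 / 2) ⟨by norm_num, by norm_num⟩)
  refine ⟨K * C₁, K * C₂, by positivity, by positivity, fun x hx => ?_⟩
  calc |psiDeriv μ σ (1 / 2) x|
      = |2 * sDen μ σ (1 / 2) x / Sfun μ σ (1 / 2) 1| *
          |upperGreenInt μ σ (1 / 2) x - lowerGreenInt μ σ (1 / 2) x| := abs_mul _ _
    _ ≤ K * (C₁ * log (1 / x) + C₂) :=
        mul_le_mul (hfactor x hx) ((abs_sub _ _).trans (add_le_add (hU x hx)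
          (hL x (Ioo_subset_Ioc_self hx)))) (abs_nonneg _) hK
    _ = K * C₁ * log (1 / x) + K * C₂ := by ring

end SquareRootDiffusion

theorem stmt11_general (μ σ p : ℝ) (hp : p = 1 / 2) :
    (∀ x ∈ Ioo (0 : ℝ) 1,
      DifferentiableAt ℝ (psiFun μ σ p) x ∧
      DifferentiableAt ℝ (deriv (psiFun μ σ p)) x ∧
      DifferentiableAt ℝ (deriv (deriv (psiFun μ σ p))) x) ∧
    ∃ C : ℝ, ∀ x ∈ Ioo (0 : ℝ) 1,
      |deriv (psiFun μ σ p) x| / max (Real.log (1 / x)) 1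
        + x * |deriv (deriv (psiFun μ σ p)) x|
        + x ^ 2 * |deriv (deriv (deriv (psiFun μ σ p))) x| ≤ C := by
  subst hp
  set c := 2 * μ / σ ^ 2
  set ψ' := psiDeriv μ σ (1 / 2)
  have h₁ : ∀ x ∈ Ioo (0 : ℝ) 1, HasDerivAt (psiFun μ σ (1 / 2)) (ψ' x) x :=
    fun x hx => hasDerivAt_psiFun_half hx
  have h₂ : ∀ x ∈ Ioo (0 : ℝ) 1, HasDerivAt (deriv (psiFun μ σ (1 / 2)))
      (-c * ψ' x - 2 / σ ^ 2 / x) x :=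
    hasDerivAt_deriv_of_forall_hasDerivAt isOpen_Ioo h₁ fun x hx => hasDerivAt_psiDeriv_half hx
  have h₃ : ∀ x ∈ Ioo (0 : ℝ) 1, HasDerivAt (deriv (deriv (psiFun μ σ (1 / 2))))
      (-c * (-c * ψ' x - 2 / σ ^ 2 / x) + 2 / σ ^ 2 / x ^ 2) x := by
    refine hasDerivAt_deriv_of_forall_hasDerivAt isOpen_Ioo h₂ fun x hx => ?_
    have hinv := (hasDerivAt_inv hx.1.ne').const_mul (2 / σ ^ 2)
    simp only [← div_eq_mul_inv] at hinv
    exact (((hasDerivAt_psiDeriv_half hx).const_mul (-c)).sub hinv).congr_deriv (by ring)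
  refine ⟨fun x hx => ⟨(h₁ x hx).differentiableAt, (h₂ x hx).differentiableAt,
    (h₃ x hx).differentiableAt⟩, ?_⟩
  obtain ⟨A, B, hA, hB, hψ'⟩ := exists_abs_psiDeriv_half_le (μ := μ) (σ := σ)
  obtain ⟨C, hC⟩ := exists_weighted_sum_le_of_abs_le_log (c := c) (a := 2 / σ ^ 2) hA hB hψ'
  refine ⟨C, fun x hx => ?_⟩
  rw [(h₁ x hx).deriv, (h₂ x hx).deriv, (h₃ x hx).deriv]
  exact hC x hx

/-- Lemma A.2 (case `p = 1/2`): `ψ` is three times differentiable on `(0,1)` and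
`sup_{x∈(0,1)} (|ψ'(x)|/max(log(1/x),1) + x|ψ''(x)| + x²|ψ'''(x)|) < ∞`. -/
theorem stmt11 (μ σ p : ℝ) (hσ : 0 < σ) (hp : p = 1 / 2) :
    (∀ x ∈ Ioo (0 : ℝ) 1,
      DifferentiableAt ℝ (psiFun μ σ p) x ∧
      DifferentiableAt ℝ (deriv (psiFun μ σ p)) x ∧
      DifferentiableAt ℝ (deriv (deriv (psiFun μ σ p))) x) ∧
    ∃ C : ℝ, ∀ x ∈ Ioo (0 : ℝ) 1,
      |deriv (psiFun μ σ p) x| / max (Real.log (1 / x)) 1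
        + x * |deriv (deriv (psiFun μ σ p)) x|
        + x ^ 2 * |deriv (deriv (deriv (psiFun μ σ p))) x| ≤ C :=
  stmt11_general μ σ p hp
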